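/- arXiv:1606.00098 — 7 statements merged into one kernel-verified Lean document; each statement's English description precedes it below -/
import Mathlib

section
/- A triple (p,q,r) of positive integers with gcd(p,q,r)=1 satisfies p+q+r = gcd(q,p+r) + gcd(p,q+r) + gcd(r,p+q) if and only if (p,q,r) is a permutation of (1,1,1), (1,1,2), or (1,2,3). -/
private lemma key_sorted (a b c : ℕ) (ha : 0 < a) (hab : a ≤ b) (hbc : b ≤ c)
    (h2 : b ∣ a + c) (h3 : c ∣ a + b)
    (hg : ∀ d, d ∣ a → d ∣ b → d ∣ c → d = 1) :
    (a = 1 ∧ b = 1 ∧ c = 1) ∨ (a = 1 ∧ b = 1 ∧ c = 2) ∨ (a = 1 ∧ b = 2 ∧ c = 3) := by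
  obtain ⟨k, hk⟩ := h3
  have hc : 0 < c := by omega
  match k, hk with
  | 0, hk => omega
  | 2, hk =>
      -- a + b = 2c with a ≤ b ≤ c forces a = b = c
      have ha1 : a = 1 := hg a dvd_rfl ⟨1, by omega⟩ ⟨1, by omega⟩
      exact Or.inl ⟨ha1, by omega, by omega⟩
  | (n+3), hk =>
      have : c * 3 ≤ c * (n + 3) := Nat.mul_le_mul le_rfl (by omega)
      omega
  | 1, hk =>
      -- c = a + b
      obtain ⟨m, hm⟩ := h2
      -- a + c = b * m, i.e. 2a + b = b * m
      match m, hm with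
      | 0, hm => omega
      | 1, hm => omega
      | 2, hm =>
          -- b = 2a, c = 3a
          have hb : b = a * 2 := by omega
          have hc3 : c = a * 3 := by omega
          have := hg a dvd_rfl ⟨2, hb⟩ ⟨3, hc3⟩
          right; right; omega
      | 3, hm =>
          -- a = b, c = 2a
          have hb : b = a := by omega
          have hc2 : c = a * 2 := by omega
          have := hg a dvd_rfl ⟨1, by omega⟩ ⟨2, hc2⟩
          right; left; omega
      | (n+4), hm =>
          have : b * 4 ≤ b * (n + 4) := Nat.mul_le_mul le_rfl (by omega)
          omega

theorem stmt_0 (p q r : ℕ) (hp : 0 < p) (hq : 0 < q) (hr : 0 < r)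
    (hgcd : Nat.gcd (Nat.gcd p q) r = 1) :
    p + q + r = Nat.gcd q (p + r) + Nat.gcd p (q + r) + Nat.gcd r (p + q) ↔
      List.Perm [p, q, r] [1, 1, 1] ∨ List.Perm [p, q, r] [1, 1, 2] ∨
        List.Perm [p, q, r] [1, 2, 3] := by
  have hchar : p + q + r = Nat.gcd q (p + r) + Nat.gcd p (q + r) + Nat.gcd r (p + q) ↔
      (q ∣ p + r ∧ p ∣ q + r ∧ r ∣ p + q) := by
    constructor
    · intro h
      have l1 : Nat.gcd q (p + r) ≤ q := Nat.gcd_le_left _ hq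
      have l2 : Nat.gcd p (q + r) ≤ p := Nat.gcd_le_left _ hp
      have l3 : Nat.gcd r (p + q) ≤ r := Nat.gcd_le_left _ hr
      have e1 : Nat.gcd q (p + r) = q := by omega
      have e2 : Nat.gcd p (q + r) = p := by omega
      have e3 : Nat.gcd r (p + q) = r := by omega
      exact ⟨e1 ▸ Nat.gcd_dvd_right _ _, e2 ▸ Nat.gcd_dvd_right _ _,
        e3 ▸ Nat.gcd_dvd_right _ _⟩
    · rintro ⟨h1, h2, h3⟩
      rw [Nat.gcd_eq_left h1, Nat.gcd_eq_left h2, Nat.gcd_eq_left h3]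
      omega
  rw [hchar]
  have hg : ∀ d, d ∣ p → d ∣ q → d ∣ r → d = 1 := by
    intro d h1 h2 h3
    exact Nat.dvd_one.mp (hgcd ▸ Nat.dvd_gcd (Nat.dvd_gcd h1 h2) h3)
  constructor
  · rintro ⟨h1, h2, h3⟩
    -- h1 : q ∣ p + r, h2 : p ∣ q + r, h3 : r ∣ p + q
    rcases le_total p q with hpq | hpq <;> rcases le_total q r with hqr | hqr <;>
      rcases le_total p r with hpr | hpr
    · obtain (⟨e1,e2,e3⟩|⟨e1,e2,e3⟩|⟨e1,e2,e3⟩) :=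
        key_sorted p q r hp hpq hqr h1 h3 hg <;> subst e1 <;> subst e2 <;> subst e3 <;> decide
    · obtain (⟨e1,e2,e3⟩|⟨e1,e2,e3⟩|⟨e1,e2,e3⟩) :=
        key_sorted p q r hp hpq hqr h1 h3 hg <;> subst e1 <;> subst e2 <;> subst e3 <;> decide
    · obtain (⟨e1,e2,e3⟩|⟨e1,e2,e3⟩|⟨e1,e2,e3⟩) :=
        key_sorted p r q hp hpr hqr
          (by obtain ⟨k, hk⟩ := h3; exact ⟨k, by omega⟩)
          (by obtain ⟨k, hk⟩ := h1; exact ⟨k, by omega⟩)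
          (fun d d1 d2 d3 => hg d d1 d3 d2) <;>
        subst e1 <;> subst e2 <;> subst e3 <;> decide
    · obtain (⟨e1,e2,e3⟩|⟨e1,e2,e3⟩|⟨e1,e2,e3⟩) :=
        key_sorted r p q hr hpr hpq
          (by obtain ⟨k, hk⟩ := h2; exact ⟨k, by omega⟩)
          (by obtain ⟨k, hk⟩ := h1; exact ⟨k, by omega⟩)
          (fun d d1 d2 d3 => hg d d2 d3 d1) <;>
        subst e1 <;> subst e2 <;> subst e3 <;> decide
    · obtain (⟨e1,e2,e3⟩|⟨e1,e2,e3⟩|⟨e1,e2,e3⟩) :=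
        key_sorted q p r hq hpq hpr
          (by obtain ⟨k, hk⟩ := h2; exact ⟨k, by omega⟩)
          (by obtain ⟨k, hk⟩ := h3; exact ⟨k, by omega⟩)
          (fun d d1 d2 d3 => hg d d2 d1 d3) <;>
        subst e1 <;> subst e2 <;> subst e3 <;> decide
    · obtain (⟨e1,e2,e3⟩|⟨e1,e2,e3⟩|⟨e1,e2,e3⟩) :=
        key_sorted q r p hq hqr hpr
          (by obtain ⟨k, hk⟩ := h3; exact ⟨k, by omega⟩)
          (by obtain ⟨k, hk⟩ := h2; exact ⟨k, by omega⟩)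
          (fun d d1 d2 d3 => hg d d3 d1 d2) <;>
        subst e1 <;> subst e2 <;> subst e3 <;> decide
    · obtain (⟨e1,e2,e3⟩|⟨e1,e2,e3⟩|⟨e1,e2,e3⟩) :=
        key_sorted r q p hr hqr hpq
          (by obtain ⟨k, hk⟩ := h1; exact ⟨k, by omega⟩)
          (by obtain ⟨k, hk⟩ := h2; exact ⟨k, by omega⟩)
          (fun d d1 d2 d3 => hg d d3 d2 d1) <;>
        subst e1 <;> subst e2 <;> subst e3 <;> decide
    · obtain (⟨e1,e2,e3⟩|⟨e1,e2,e3⟩|⟨e1,e2,e3⟩) :=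
        key_sorted r q p hr hqr hpq
          (by obtain ⟨k, hk⟩ := h1; exact ⟨k, by omega⟩)
          (by obtain ⟨k, hk⟩ := h2; exact ⟨k, by omega⟩)
          (fun d d1 d2 d3 => hg d d3 d2 d1) <;>
        subst e1 <;> subst e2 <;> subst e3 <;> decide
  · have step : ∀ l : List ℕ, List.Perm [p,q,r] l → p ∈ l ∧ q ∈ l ∧ r ∈ l ∧ p + (q + r) = l.sum ∧ p * (q * r) = l.prod := by
      intro l h
      refine ⟨h.mem_iff.mp (by simp), h.mem_iff.mp (by simp), h.mem_iff.mp (by simp), ?_, ?_⟩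
      · have := h.sum_eq; simpa using this
      · have := h.prod_eq; simpa using this
    rintro (h | h | h) <;> obtain ⟨hp', hq', hr', hs, hprd⟩ := step _ h <;>
      norm_num [List.sum_cons, List.prod_cons] at hp' hq' hr' hs hprd
    · subst hp'; subst hq'; subst hr'; exact ⟨by decide, by decide, by decide⟩
    · rcases hp' with rfl | rfl <;> rcases hq' with rfl | rfl <;> rcases hr' with rfl | rfl <;>
        first | omega | exact ⟨by decide, by decide, by decide⟩
    · rcases hp' with rfl | rfl | rfl <;> rcases hq' with rfl | rfl | rfl <;>
        rcases hr' with rfl | rfl | rfl <;>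
        first | omega | exact ⟨by decide, by decide, by decide⟩
end

section
/- If p, q, r are positive integers satisfying gcd(q,p+r)=q, gcd(p,q+r)=p and gcd(r,p+q)=r, then there exist positive integers α, β, γ with p+r = αq, q+r = βp, p+q = γr, and these satisfy αβγ = 2 + α + β + γ. -/
theorem stmt_1 (p q r : ℕ) (hp : 0 < p) (hq : 0 < q) (hr : 0 < r)
    (h1 : Nat.gcd q (p + r) = q) (h2 : Nat.gcd p (q + r) = p)
    (h3 : Nat.gcd r (p + q) = r) :
    ∃ α β γ : ℕ, 0 < α ∧ 0 < β ∧ 0 < γ ∧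
      p + r = α * q ∧ q + r = β * p ∧ p + q = γ * r ∧
      α * β * γ = 2 + α + β + γ := by
  have d1 : q ∣ p + r := h1 ▸ Nat.gcd_dvd_right q (p + r)
  have d2 : p ∣ q + r := h2 ▸ Nat.gcd_dvd_right p (q + r)
  have d3 : r ∣ p + q := h3 ▸ Nat.gcd_dvd_right r (p + q)
  obtain ⟨a, ha⟩ := d1
  obtain ⟨b, hb⟩ := d2
  obtain ⟨c, hc⟩ := d3
  have hpos : 0 < p * q * r := by positivity
  have h0a : 0 < a := by nlinarith
  have h0b : 0 < b := by nlinarith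
  have h0c : 0 < c := by nlinarith
  refine ⟨a, b, c, h0a, h0b, h0c, by linarith [Nat.mul_comm q a],
    by linarith [Nat.mul_comm p b], by linarith [Nat.mul_comm r c], ?_⟩
  have key : (a * b * c) * (p * q * r) = (2 + a + b + c) * (p * q * r) := by
    have h : (q * a) * ((p * b) * (r * c)) =
        2 * (p * q * r) + (q * a) * (p * r) + (p * b) * (q * r) + (r * c) * (p * q) := by
      rw [← ha, ← hb, ← hc]; ring
    nlinarith [h]
  exact Nat.eq_of_mul_eq_mul_right hpos key
end

section
/- A triple (p,q,r) of positive integers with gcd(p,q,r)=1, p < q ≤ r, and q + r > p satisfies q + r = gcd(p,q) + gcd(p,r) + gcd(q,q+r-p) + gcd(r,q+r-p) if and only if (p,q,r) ∈ {(1,2,3), (1,3,4), (1,2,2)}. -/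
/-!
Since `gcd(q, q + r - p) = gcd(q, r - p)` and `gcd(r, q + r - p) = gcd(r, q - p)`, the four terms
are bounded by `p`, `p`, `r - p` and `q - p`, whose sum is exactly `q + r`. So the identity holds
precisely when every bound is attained, i.e. `p ∣ q`, `p ∣ r`, `r - p ∣ q` and `q - p ∣ r`.
Coprimality then forces `p = 1`, and the two remaining divisibilities leave only `r = q` with
`q - 1 ∣ 1`, or `r = q + 1` with `q - 1 ∣ 2`.
-/

theorem gcd_sum_eq_iff_dvd {p q r : ℕ} (hp : 0 < p) (hpq : p < q) (hpr : p < r) :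
    Nat.gcd p q + Nat.gcd p r + Nat.gcd q (q + r - p) + Nat.gcd r (q + r - p) = q + r ↔
      p ∣ q ∧ p ∣ r ∧ r - p ∣ q ∧ q - p ∣ r := by
  have hrq : q + r - p = r - p + q := by omega
  have hqr : q + r - p = q - p + r := by omega
  rw [← Nat.gcd_eq_left_iff_dvd, ← Nat.gcd_eq_left_iff_dvd, ← Nat.gcd_eq_right_iff_dvd,
    ← Nat.gcd_eq_right_iff_dvd, hrq, Nat.gcd_add_self_right, ← hrq, hqr, Nat.gcd_add_self_right]
  have := Nat.gcd_le_left q hp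
  have := Nat.gcd_le_left r hp
  have := Nat.gcd_le_right (n := r - p) q (by omega)
  have := Nat.gcd_le_right (n := q - p) r (by omega)
  omega

theorem eq_of_sub_one_dvd_of_sub_one_dvd {q r : ℕ} (hq : 1 < q) (hqr : q ≤ r)
    (hrq : r - 1 ∣ q) (hqr' : q - 1 ∣ r) :
    (q, r) = (2, 3) ∨ (q, r) = (3, 4) ∨ (q, r) = (2, 2) := by
  have hr : r ≤ q + 1 := by have := Nat.le_of_dvd (by omega) hrq; omega
  have hq3 : q ≤ 3 := by
    have := Nat.le_of_dvd (by omega) (Nat.dvd_sub hqr' (dvd_refl (q - 1)))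
    omega
  interval_cases q <;> interval_cases r <;> simp_all

theorem stmt_4_general (p q r : ℕ) (hp : 0 < p)
    (hgcd : Nat.gcd (Nat.gcd p q) r = 1) (h1 : p < q) (h2 : q ≤ r) :
    q + r = Nat.gcd p q + Nat.gcd p r + Nat.gcd q (q + r - p) +
        Nat.gcd r (q + r - p) ↔
      (p, q, r) = (1, 2, 3) ∨ (p, q, r) = (1, 3, 4) ∨ (p, q, r) = (1, 2, 2) := by
  constructor
  · intro h
    obtain ⟨hpq, hpr, hrq, hqr⟩ := (gcd_sum_eq_iff_dvd hp h1 (h1.trans_le h2)).1 h.symm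
    have hp1 : p = 1 :=
      Nat.eq_one_of_dvd_one (hgcd ▸ Nat.dvd_gcd (Nat.dvd_gcd dvd_rfl hpq) hpr)
    subst hp1
    simpa using eq_of_sub_one_dvd_of_sub_one_dvd h1 h2 hrq hqr
  · rintro (h | h | h) <;> obtain ⟨rfl, rfl, rfl⟩ := Prod.ext_iff.1 h <;> decide

theorem stmt_4 (p q r : ℕ) (hp : 0 < p) (hq : 0 < q) (hr : 0 < r)
    (hgcd : Nat.gcd (Nat.gcd p q) r = 1) (h1 : p < q) (h2 : q ≤ r)
    (h3 : p < q + r) :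
    q + r = Nat.gcd p q + Nat.gcd p r + Nat.gcd q (q + r - p) +
        Nat.gcd r (q + r - p) ↔
      (p, q, r) = (1, 2, 3) ∨ (p, q, r) = (1, 3, 4) ∨ (p, q, r) = (1, 2, 2) :=
  stmt_4_general p q r hp hgcd h1 h2
end

section
/- A triple (p,q,r) of positive integers with gcd(p,q,r)=1, q ≤ r < p, and q + r > p satisfies q + r = gcd(p,q) + gcd(p,r) + gcd(q,q+r-p) + gcd(r,q+r-p) if and only if (p,q,r) ∈ {(4,2,3), (6,3,4), (3,2,2)}. -/
private lemma half_of_dvd {d n : ℕ} (h : d ∣ n) (hlt : d < n) : 2 * d ≤ n := by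
  obtain ⟨k, rfl⟩ := h
  have hk : 2 ≤ k := by
    by_contra hc
    interval_cases k <;> omega
  calc 2 * d = d * 2 := by ring
    _ ≤ d * k := Nat.mul_le_mul_left d hk

private lemma sum_div_helper {b d r : ℕ} (hb : b ∣ r) (hd : d ∣ r)
    (h2b : 2 * b ≤ r) (h2d : 2 * d ≤ r) (hbp : 0 < b) (hdp : 0 < d)
    (hsum : b + d + 1 = r) : r ≤ 6 := by
  obtain ⟨k, hk⟩ := hb
  obtain ⟨m, hm⟩ := hd
  have hd' : d ∣ r := ⟨m, hm⟩
  have hb' : b ∣ r := ⟨k, hk⟩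
  have hk2 : 2 ≤ k := by
    by_contra hc
    interval_cases k <;> omega
  have hm2 : 2 ≤ m := by
    by_contra hc
    interval_cases m <;> omega
  rcases Nat.lt_or_ge k 3 with hk3 | hk3
  · -- k = 2
    have hk' : k = 2 := by omega
    subst hk'
    have hdd : d ∣ 2 * d := Dvd.intro 2 (by ring)
    have h2 : d ∣ r - 2 * d := Nat.dvd_sub hd' hdd
    have hr2 : r - 2 * d = 2 := by omega
    rw [hr2] at h2
    have := Nat.le_of_dvd (by norm_num) h2
    omega
  · rcases Nat.lt_or_ge m 3 with hm3 | hm3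
    · have hm' : m = 2 := by omega
      subst hm'
      have hbb : b ∣ 2 * b := Dvd.intro 2 (by ring)
      have h2 : b ∣ r - 2 * b := Nat.dvd_sub hb' hbb
      have hr2 : r - 2 * b = 2 := by omega
      rw [hr2] at h2
      have := Nat.le_of_dvd (by norm_num) h2
      omega
    · have h3b : 3 * b ≤ r := by
        calc 3 * b = b * 3 := by ring
          _ ≤ b * k := Nat.mul_le_mul_left b hk3
          _ = r := hk.symm
      have h3d : 3 * d ≤ r := by
        calc 3 * d = d * 3 := by ring
          _ ≤ d * m := Nat.mul_le_mul_left d hm3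
          _ = r := hm.symm
      omega

theorem stmt_5 (p q r : ℕ) (hp : 0 < p) (hq : 0 < q) (hr : 0 < r)
    (hgcd : Nat.gcd (Nat.gcd p q) r = 1) (h1 : q ≤ r) (h2 : r < p)
    (h3 : p < q + r) :
    q + r = Nat.gcd p q + Nat.gcd p r + Nat.gcd q (q + r - p) +
        Nat.gcd r (q + r - p) ↔
      (p, q, r) = (4, 2, 3) ∨ (p, q, r) = (6, 3, 4) ∨ (p, q, r) = (3, 2, 2) := by
  constructor
  · intro heq
    -- basic divisibility facts
    have hap : Nat.gcd p q ∣ p := Nat.gcd_dvd_left p q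
    have haq : Nat.gcd p q ∣ q := Nat.gcd_dvd_right p q
    have hbp : Nat.gcd p r ∣ p := Nat.gcd_dvd_left p r
    have hbr : Nat.gcd p r ∣ r := Nat.gcd_dvd_right p r
    have hcq : Nat.gcd q (q + r - p) ∣ q := Nat.gcd_dvd_left _ _
    have hcs : Nat.gcd q (q + r - p) ∣ (q + r - p) := Nat.gcd_dvd_right _ _
    have hdr : Nat.gcd r (q + r - p) ∣ r := Nat.gcd_dvd_left _ _
    have hds : Nat.gcd r (q + r - p) ∣ (q + r - p) := Nat.gcd_dvd_right _ _
    have hspos : 0 < q + r - p := by omega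
    have hcle : Nat.gcd q (q + r - p) ≤ q + r - p := Nat.le_of_dvd hspos hcs
    have hdle : Nat.gcd r (q + r - p) ≤ q + r - p := Nat.le_of_dvd hspos hds
    have hale : Nat.gcd p q ≤ q := Nat.le_of_dvd hq haq
    have hble : Nat.gcd p r ≤ r := Nat.le_of_dvd hr hbr
    have hapos : 0 < Nat.gcd p q := Nat.gcd_pos_of_pos_left q hp
    have hbpos : 0 < Nat.gcd p r := Nat.gcd_pos_of_pos_left r hp
    have hcpos : 0 < Nat.gcd q (q + r - p) := Nat.gcd_pos_of_pos_left _ hq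
    have hdpos : 0 < Nat.gcd r (q + r - p) := Nat.gcd_pos_of_pos_left _ hr
    have h2c : 2 * Nat.gcd q (q + r - p) ≤ q := half_of_dvd hcq (by omega)
    have h2d : 2 * Nat.gcd r (q + r - p) ≤ r := half_of_dvd hdr (by omega)
    -- main bound
    have hbound : q ≤ 6 ∧ r ≤ 10 ∧ p ≤ 15 := by
      rcases eq_or_lt_of_le hale with haeq | halt
      · -- gcd p q = q, so q ∣ p
        have hqp : q ∣ p := haeq ▸ hap
        have hcr : Nat.gcd q (q + r - p) ∣ r := by
          have h' : Nat.gcd q (q + r - p) ∣ (q + r - p) + p :=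
            Nat.dvd_add hcs (dvd_trans hcq hqp)
          have h'' := Nat.dvd_sub h' hcq
          have : (q + r - p) + p - q = r := by omega
          rwa [this] at h''
        have hc1 : Nat.gcd q (q + r - p) = 1 := by
          have h' : Nat.gcd q (q + r - p) ∣ Nat.gcd (Nat.gcd p q) r :=
            Nat.dvd_gcd (Nat.dvd_gcd (dvd_trans hcq hqp) hcq) hcr
          rw [hgcd] at h'
          exact Nat.eq_one_of_dvd_one h'
        rcases eq_or_lt_of_le hble with hbeq | hblt
        · -- also gcd p r = r: contradiction
          omega
        · have h2b : 2 * Nat.gcd p r ≤ r := half_of_dvd hbr hblt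
          have hsum : Nat.gcd p r + Nat.gcd r (q + r - p) + 1 = r := by omega
          have hr6 : r ≤ 6 := sum_div_helper hbr hdr h2b h2d hbpos hdpos hsum
          omega
      · have h2a : 2 * Nat.gcd p q ≤ q := half_of_dvd haq halt
        rcases eq_or_lt_of_le hble with hbeq | hblt
        · -- gcd p r = r, so r ∣ p
          have hrp : r ∣ p := hbeq ▸ hbp
          have hdq : Nat.gcd r (q + r - p) ∣ q := by
            have h' : Nat.gcd r (q + r - p) ∣ (q + r - p) + p :=
              Nat.dvd_add hds (dvd_trans hdr hrp)
            have h'' := Nat.dvd_sub h' hdr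
            have : (q + r - p) + p - r = q := by omega
            rwa [this] at h''
          have hd1 : Nat.gcd r (q + r - p) = 1 := by
            have h' : Nat.gcd r (q + r - p) ∣ Nat.gcd (Nat.gcd p q) r :=
              Nat.dvd_gcd (Nat.dvd_gcd (dvd_trans hdr hrp) hdq) hdr
            rw [hgcd] at h'
            exact Nat.eq_one_of_dvd_one h'
          have hsum : Nat.gcd p q + Nat.gcd q (q + r - p) + 1 = q := by omega
          have hq6 : q ≤ 6 := sum_div_helper haq hcq h2a h2c hapos hcpos hsum
          have h2r : 2 * r ≤ p := half_of_dvd hrp h2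
          omega
        · have h2b : 2 * Nat.gcd p r ≤ r := half_of_dvd hbr hblt
          -- forces a = q/2, b = r/2, c = q/2, d = r/2
          have haq2 : 2 * Nat.gcd p q = q := by omega
          have hbr2 : 2 * Nat.gcd p r = r := by omega
          have g1 : Nat.Coprime (Nat.gcd p q) (Nat.gcd p r) := by
            have h' : Nat.gcd (Nat.gcd p q) (Nat.gcd p r) ∣ Nat.gcd (Nat.gcd p q) r :=
              Nat.dvd_gcd (Nat.gcd_dvd_left _ _) (dvd_trans (Nat.gcd_dvd_right _ _) hbr)
            rw [hgcd] at h'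
            exact Nat.eq_one_of_dvd_one h'
          have huv : Nat.gcd p q * Nat.gcd p r ∣ p :=
            Nat.Coprime.mul_dvd_of_dvd_of_dvd g1 hap hbp
          have huvle : Nat.gcd p q * Nat.gcd p r ≤ p := Nat.le_of_dvd hp huv
          -- show gcd p q ≤ 3
          have hu3 : Nat.gcd p q ≤ 3 := by
            by_contra hc
            push_neg at hc
            have h4 : 4 * Nat.gcd p r ≤ Nat.gcd p q * Nat.gcd p r :=
              Nat.mul_le_mul_right _ (by omega)
            have : 4 * Nat.gcd p r ≤ p := le_trans h4 huvle
            omega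
          -- show 3 * gcd p r ≤ p
          obtain ⟨k, hk⟩ := hbp
          have hk3 : 3 ≤ k := by
            by_contra hc
            push_neg at hc
            have : Nat.gcd p r * k ≤ Nat.gcd p r * 2 :=
              Nat.mul_le_mul_left _ (by omega)
            omega
          have h3v : 3 * Nat.gcd p r ≤ p := by
            calc 3 * Nat.gcd p r = Nat.gcd p r * 3 := by ring
              _ ≤ Nat.gcd p r * k := Nat.mul_le_mul_left _ hk3
              _ = p := hk.symm
          omega
    obtain ⟨hq6, hr10, hp15⟩ := hbound
    clear hap haq hbp hbr hcq hcs hdr hds hcle hdle hale hble hapos hbpos hcpos hdpos h2c h2d hspos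
    interval_cases p <;> interval_cases r <;> interval_cases q <;>
      revert hgcd heq <;> decide
  · rintro (h | h | h) <;>
      (simp only [Prod.mk.injEq] at h; obtain ⟨rfl, rfl, rfl⟩ := h; decide)
end

section
/- A triple (p,q,r) of positive integers with gcd(p,q,r)=1 and q + r > p satisfies q + r = gcd(p,q) + gcd(p,r) + gcd(q,q+r-p) + gcd(r,q+r-p) if and only if (p,q,r) belongs to the set {(2,1,3),(2,3,1),(2,1,4),(2,4,1),(3,1,4),(3,4,1),(3,1,6),(3,6,1),(4,1,6),(4,6,1),(1,2,2),(3,2,2),(1,2,3),(1,3,2),(4,2,3),(4,3,2),(1,3,4),(1,4,3),(6,3,4),(6,4,3)}. -/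
set_option synthInstance.maxHeartbeats 2000000 in
set_option synthInstance.maxSize 2000 in
set_option maxRecDepth 100000 in
lemma brute_7 : ∀ (p : Fin 12) (q : Fin 7) (r : Fin 7), (0 < (p:ℕ) → 0 < (q:ℕ) → 0 < (r:ℕ) →
    Nat.gcd (Nat.gcd p q) r = 1 → (p:ℕ) < q + r →
    ((q:ℕ) + r = Nat.gcd p q + Nat.gcd p r + Nat.gcd q ((q:ℕ) + r - p) + Nat.gcd r ((q:ℕ) + r - p) ↔
      ((p:ℕ), (q:ℕ), (r:ℕ)) ∈ ([(2,1,3),(2,3,1),(2,1,4),(2,4,1),(3,1,4),(3,4,1),(3,1,6),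
        (3,6,1),(4,1,6),(4,6,1),(1,2,2),(3,2,2),(1,2,3),(1,3,2),(4,2,3),
        (4,3,2),(1,3,4),(1,4,3),(6,3,4),(6,4,3)] : List (ℕ × ℕ × ℕ)))) := by decide

lemma memiff_7 (p q r : ℕ) : (p,q,r) ∈ ([(2,1,3),(2,3,1),(2,1,4),(2,4,1),(3,1,4),(3,4,1),(3,1,6),
        (3,6,1),(4,1,6),(4,6,1),(1,2,2),(3,2,2),(1,2,3),(1,3,2),(4,2,3),
        (4,3,2),(1,3,4),(1,4,3),(6,3,4),(6,4,3)] : List (ℕ × ℕ × ℕ)) ↔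
    (p, q, r) ∈ ({(2,1,3),(2,3,1),(2,1,4),(2,4,1),(3,1,4),(3,4,1),(3,1,6),
        (3,6,1),(4,1,6),(4,6,1),(1,2,2),(3,2,2),(1,2,3),(1,3,2),(4,2,3),
        (4,3,2),(1,3,4),(1,4,3),(6,3,4),(6,4,3)} : Set (ℕ × ℕ × ℕ)) := by
  simp [Set.mem_insert_iff, Prod.ext_iff]

lemma two_mul_le_7 {d n : ℕ} (hn : 0 < n) (hd : d ∣ n) (hne : d ≠ n) : 2 * d ≤ n := by
  obtain ⟨m, rfl⟩ := hd
  rcases m with _ | _ | m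
  · simp at hn
  · simp at hne
  · rw [Nat.mul_comm 2 d]
    exact Nat.mul_le_mul_left d (by omega)

lemma sum_div_7 {n d1 d2 : ℕ} (h1 : d1 ∣ n) (h2 : d2 ∣ n) (b1 : 2*d1 ≤ n) (b2 : 2*d2 ≤ n)
    (hs : d1 + d2 + 1 = n) : n ≤ 6 := by
  by_contra hcon
  push_neg at hcon
  have hd1pos : 0 < d1 := Nat.pos_of_dvd_of_pos h1 (by omega)
  have hd2pos : 0 < d2 := Nat.pos_of_dvd_of_pos h2 (by omega)
  have hdd1 : d1 ∣ n - 2*d1 := Nat.dvd_sub h1 (dvd_mul_left d1 2)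
  have hdd2 : d2 ∣ n - 2*d2 := Nat.dvd_sub h2 (dvd_mul_left d2 2)
  have hcases : 2*d1 = n ∨ 2*d1 = n - 1 ∨ 2*d1 = n - 2 := by omega
  rcases hcases with h | h | h
  · have : n - 2*d2 = 2 := by omega
    rw [this] at hdd2
    have := Nat.le_of_dvd (by norm_num) hdd2
    omega
  · have : n - 2*d1 = 1 := by omega
    rw [this] at hdd1
    have := Nat.le_of_dvd (by norm_num) hdd1
    omega
  · have : n - 2*d1 = 2 := by omega
    rw [this] at hdd1
    have := Nat.le_of_dvd (by norm_num) hdd1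
    omega

lemma Dside_7 (p s q r : ℕ) (hsum : p + s = q + r) (hA : q ∣ p ∨ q ∣ s) :
    Nat.gcd q p + Nat.gcd q s = q + Nat.gcd q r := by
  rcases hA with ⟨k, rfl⟩ | ⟨k, rfl⟩
  · have h1 : Nat.gcd q (q * k) = q := Nat.gcd_eq_left ⟨k, rfl⟩
    have h2 : Nat.gcd q s = Nat.gcd q r := by
      have hrw : s + q * k = r + q := by
        rw [Nat.add_comm s (q*k), hsum, Nat.add_comm q r]
      calc Nat.gcd q s = Nat.gcd q (s + q * k) := (Nat.gcd_add_mul_left_right q s k).symm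
        _ = Nat.gcd q (r + q) := by rw [hrw]
        _ = Nat.gcd q r := Nat.gcd_add_self_right q r
    rw [h1, h2]
  · have h1 : Nat.gcd q (q * k) = q := Nat.gcd_eq_left ⟨k, rfl⟩
    have h2 : Nat.gcd q p = Nat.gcd q r := by
      have hrw : p + q * k = r + q := by
        rw [hsum, Nat.add_comm q r]
      calc Nat.gcd q p = Nat.gcd q (p + q * k) := (Nat.gcd_add_mul_left_right q p k).symm
        _ = Nat.gcd q (r + q) := by rw [hrw]
        _ = Nat.gcd q r := Nat.gcd_add_self_right q r
    rw [h1, h2]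
    omega

lemma side_7 (p q r s : ℕ) (hp : 0 < p) (hq : 0 < q) (hr : 0 < r) (hs : 0 < s)
    (hsum : p + s = q + r)
    (hone : ∀ d, d ∣ p → d ∣ q → d ∣ r → d = 1)
    (hA1 : q ∣ p ∨ q ∣ s) (hA2p : ¬ r ∣ p) (hA2s : ¬ r ∣ s)
    (heq : Nat.gcd q p + Nat.gcd q s + (Nat.gcd r p + Nat.gcd r s) = q + r) :
    q < r ∧ r ≤ 6 := by
  have hgp : Nat.gcd q r ∣ p := by
    rcases hA1 with h | h
    · exact dvd_trans (Nat.gcd_dvd_left q r) h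
    · have h1 : Nat.gcd q r ∣ p + s := by
        rw [hsum]; exact dvd_add (Nat.gcd_dvd_left q r) (Nat.gcd_dvd_right q r)
      have h2 : Nat.gcd q r ∣ s := dvd_trans (Nat.gcd_dvd_left q r) h
      have h3 := Nat.dvd_sub h1 h2
      have : p + s - s = p := by omega
      rwa [this] at h3
  have hg1 : Nat.gcd q r = 1 := hone _ hgp (Nat.gcd_dvd_left _ _) (Nat.gcd_dvd_right _ _)
  have hD : Nat.gcd q p + Nat.gcd q s = q + 1 := by
    rw [Dside_7 p s q r hsum hA1, hg1]
  have b1 : 2 * Nat.gcd r p ≤ r :=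
    two_mul_le_7 hr (Nat.gcd_dvd_left r p) (fun h => hA2p (h ▸ Nat.gcd_dvd_right r p))
  have b2 : 2 * Nat.gcd r s ≤ r :=
    two_mul_le_7 hr (Nat.gcd_dvd_left r s) (fun h => hA2s (h ▸ Nat.gcd_dvd_right r s))
  have hsum6 : Nat.gcd r p + Nat.gcd r s + 1 = r := by omega
  have hr6 : r ≤ 6 := sum_div_7 (Nat.gcd_dvd_left r p) (Nat.gcd_dvd_left r s) b1 b2 hsum6
  refine ⟨?_, hr6⟩
  rcases hA1 with ⟨k, hk⟩ | ⟨k, hk⟩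
  · have hk0 : k ≠ 0 := by rintro rfl; simp at hk; omega
    have hk1 : k ≠ 1 := by
      rintro rfl
      simp at hk
      have hsr : s = r := by omega
      exact hA2s (hsr ▸ dvd_refl r)
    have hp2 : q * 2 ≤ q * k := Nat.mul_le_mul_left q (by omega)
    rw [← hk] at hp2
    omega
  · have hk0 : k ≠ 0 := by rintro rfl; simp at hk; omega
    have hk1 : k ≠ 1 := by
      rintro rfl
      simp at hk
      have hsr : p = r := by omega
      exact hA2p (hsr ▸ dvd_refl r)
    have hp2 : q * 2 ≤ q * k := Nat.mul_le_mul_left q (by omega)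
    rw [← hk] at hp2
    omega

theorem stmt_7 (p q r : ℕ) (hp : 0 < p) (hq : 0 < q) (hr : 0 < r)
    (hgcd : Nat.gcd (Nat.gcd p q) r = 1) (h3 : p < q + r) :
    q + r = Nat.gcd p q + Nat.gcd p r + Nat.gcd q (q + r - p) +
        Nat.gcd r (q + r - p) ↔
      (p, q, r) ∈ ({(2,1,3),(2,3,1),(2,1,4),(2,4,1),(3,1,4),(3,4,1),(3,1,6),
        (3,6,1),(4,1,6),(4,6,1),(1,2,2),(3,2,2),(1,2,3),(1,3,2),(4,2,3),
        (4,3,2),(1,3,4),(1,4,3),(6,3,4),(6,4,3)} : Set (ℕ × ℕ × ℕ)) := by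
  have hsum : p + (q + r - p) = q + r := by omega
  have hspos : 0 < q + r - p := by omega
  have hone : ∀ d, d ∣ p → d ∣ q → d ∣ r → d = 1 := by
    intro d h1 h2 h3'
    have hd : d ∣ Nat.gcd (Nat.gcd p q) r := Nat.dvd_gcd (Nat.dvd_gcd h1 h2) h3'
    rw [hgcd] at hd
    exact Nat.dvd_one.mp hd
  constructor
  · intro heq
    have heq' : Nat.gcd q p + Nat.gcd q (q+r-p) + (Nat.gcd r p + Nat.gcd r (q+r-p)) = q + r := by
      rw [Nat.gcd_comm q p, Nat.gcd_comm r p]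
      omega
    have hb : q ≤ 6 ∧ r ≤ 6 := by
      by_cases hA1 : q ∣ p ∨ q ∣ (q+r-p)
      · by_cases hA2 : r ∣ p ∨ r ∣ (q+r-p)
        · exfalso
          have d1 := Dside_7 p (q+r-p) q r hsum hA1
          have d2 := Dside_7 p (q+r-p) r q (by omega) hA2
          have hc : Nat.gcd q r = Nat.gcd r q := Nat.gcd_comm q r
          have hg : 0 < Nat.gcd q r := Nat.gcd_pos_of_pos_left r hq
          omega
        · push_neg at hA2
          have := side_7 p q r (q+r-p) hp hq hr hspos hsum hone hA1 hA2.1 hA2.2 heq'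
          omega
      · by_cases hA2 : r ∣ p ∨ r ∣ (q+r-p)
        · push_neg at hA1
          have := side_7 p r q (q+r-p) hp hr hq hspos (by omega)
            (fun d h1 h2 h3' => hone d h1 h3' h2) hA2 hA1.1 hA1.2 (by omega)
          omega
        · push_neg at hA1
          push_neg at hA2
          have pb1 : 2 * Nat.gcd q p ≤ q :=
            two_mul_le_7 hq (Nat.gcd_dvd_left q p) (fun h => hA1.1 (h ▸ Nat.gcd_dvd_right q p))
          have pb2 : 2 * Nat.gcd q (q+r-p) ≤ q := by
            refine two_mul_le_7 hq (Nat.gcd_dvd_left q _) (fun h => hA1.2 ?_)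
            have hx := Nat.gcd_dvd_right q (q+r-p)
            rwa [h] at hx
          have pb3 : 2 * Nat.gcd r p ≤ r :=
            two_mul_le_7 hr (Nat.gcd_dvd_left r p) (fun h => hA2.1 (h ▸ Nat.gcd_dvd_right r p))
          have pb4 : 2 * Nat.gcd r (q+r-p) ≤ r := by
            refine two_mul_le_7 hr (Nat.gcd_dvd_left r _) (fun h => hA2.2 ?_)
            have hx := Nat.gcd_dvd_right r (q+r-p)
            rwa [h] at hx
          have e1 : 2 * Nat.gcd q p = q := by omega
          have e2 : 2 * Nat.gcd q (q+r-p) = q := by omega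
          have e3 : 2 * Nat.gcd r p = r := by omega
          have e4 : 2 * Nat.gcd r (q+r-p) = r := by omega
          have hus : Nat.gcd q p ∣ (q+r-p) := by
            have hqq : Nat.gcd q (q+r-p) = Nat.gcd q p := by omega
            have hx := Nat.gcd_dvd_right q (q+r-p)
            rwa [hqq] at hx
          have hvs : Nat.gcd r p ∣ (q+r-p) := by
            have hrr : Nat.gcd r (q+r-p) = Nat.gcd r p := by omega
            have hx := Nat.gcd_dvd_right r (q+r-p)
            rwa [hrr] at hx
          have hw : Nat.Coprime (Nat.gcd q p) (Nat.gcd r p) :=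
            hone _ (dvd_trans (Nat.gcd_dvd_left _ _) (Nat.gcd_dvd_right q p))
              (dvd_trans (Nat.gcd_dvd_left _ _) (Nat.gcd_dvd_left q p))
              (dvd_trans (Nat.gcd_dvd_right _ _) (Nat.gcd_dvd_left r p))
          have h1u : Nat.gcd q p ∣ q + r := by
            have := dvd_add (Nat.gcd_dvd_right q p) hus
            rwa [hsum] at this
          have h1v : Nat.gcd r p ∣ q + r := by
            have := dvd_add (Nat.gcd_dvd_right r p) hvs
            rwa [hsum] at this
          have hu2 : Nat.gcd q p ∣ 2 * Nat.gcd r p := by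
            rw [show q + r = 2 * Nat.gcd q p + 2 * Nat.gcd r p from by omega] at h1u
            exact (Nat.dvd_add_right (dvd_mul_left (Nat.gcd q p) 2)).mp h1u
          have hv2 : Nat.gcd r p ∣ 2 * Nat.gcd q p := by
            rw [show q + r = 2 * Nat.gcd r p + 2 * Nat.gcd q p from by omega] at h1v
            exact (Nat.dvd_add_right (dvd_mul_left (Nat.gcd r p) 2)).mp h1v
          have hu : Nat.gcd q p ∣ 2 := Nat.Coprime.dvd_of_dvd_mul_right hw hu2
          have hv : Nat.gcd r p ∣ 2 := Nat.Coprime.dvd_of_dvd_mul_right hw.symm hv2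
          have hu' := Nat.le_of_dvd (by norm_num) hu
          have hv' := Nat.le_of_dvd (by norm_num) hv
          omega
    obtain ⟨hq6, hr6⟩ := hb
    have hres := (brute_7 ⟨p, by omega⟩ ⟨q, by omega⟩ ⟨r, by omega⟩ hp hq hr hgcd h3).mp heq
    exact (memiff_7 p q r).mp hres
  · intro hmem
    have hres := (memiff_7 p q r).mpr hmem
    simp only [List.mem_cons, List.not_mem_nil, or_false, Prod.mk.injEq] at hres
    rcases hres with ⟨rfl,rfl,rfl⟩|⟨rfl,rfl,rfl⟩|⟨rfl,rfl,rfl⟩|⟨rfl,rfl,rfl⟩|⟨rfl,rfl,rfl⟩|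
      ⟨rfl,rfl,rfl⟩|⟨rfl,rfl,rfl⟩|⟨rfl,rfl,rfl⟩|⟨rfl,rfl,rfl⟩|⟨rfl,rfl,rfl⟩|⟨rfl,rfl,rfl⟩|
      ⟨rfl,rfl,rfl⟩|⟨rfl,rfl,rfl⟩|⟨rfl,rfl,rfl⟩|⟨rfl,rfl,rfl⟩|⟨rfl,rfl,rfl⟩|⟨rfl,rfl,rfl⟩|
      ⟨rfl,rfl,rfl⟩|⟨rfl,rfl,rfl⟩|⟨rfl,rfl,rfl⟩ <;> decide
end

section
/- If p, q, r are positive integers with gcd(p,q,r)=1 satisfying p = gcd(p,q) + gcd(p,r) + gcd(p,q+r), then p ∈ {3,4,6}. -/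
lemma aux_bound (x y z : ℕ) (hx : 2 ≤ x) (hy : 2 ≤ y) (hz : 2 ≤ z)
    (hE : y*z + x*z + x*y = x*y*z) : x ≤ 6 := by
  by_contra hc
  push_neg at hc
  rcases Nat.lt_or_ge (y + z) 5 with h5 | h5
  · have hy' : y = 2 := by omega
    have hz' : z = 2 := by omega
    subst hy' hz'
    omega
  · zify at *
    nlinarith [mul_nonneg (by linarith : (0:ℤ) ≤ y - 2) (by linarith : (0:ℤ) ≤ z - 2),
      mul_nonneg (by linarith : (0:ℤ) ≤ x - 7) (by nlinarith : (0:ℤ) ≤ y*z - y - z),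
      mul_pos (by linarith : (0:ℤ) < y) (by linarith : (0:ℤ) < z)]

theorem stmt_13 (p q r : ℕ) (hp : 0 < p) (hq : 0 < q) (hr : 0 < r)
    (hgcd : Nat.gcd (Nat.gcd p q) r = 1)
    (h : p = Nat.gcd p q + Nat.gcd p r + Nat.gcd p (q + r)) :
    p = 3 ∨ p = 4 ∨ p = 6 := by
  set a := Nat.gcd p q with hadef
  set b := Nat.gcd p r with hbdef
  set c := Nat.gcd p (q + r) with hcdef
  have hap : a ∣ p := Nat.gcd_dvd_left _ _
  have hbp : b ∣ p := Nat.gcd_dvd_left _ _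
  have hcp : c ∣ p := Nat.gcd_dvd_left _ _
  have ha0 : 0 < a := Nat.gcd_pos_of_pos_left _ hp
  have hb0 : 0 < b := Nat.gcd_pos_of_pos_left _ hp
  have hc0 : 0 < c := Nat.gcd_pos_of_pos_left _ hp
  have hbr : b ∣ r := Nat.gcd_dvd_right _ _
  have hcop : Nat.gcd a b = 1 := by
    have h1 : Nat.gcd a b ∣ Nat.gcd a r :=
      Nat.dvd_gcd (Nat.gcd_dvd_left _ _) ((Nat.gcd_dvd_right a b).trans hbr)
    rw [hgcd] at h1
    exact Nat.dvd_one.mp h1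
  obtain ⟨x, hx⟩ := hap
  obtain ⟨y, hy⟩ := hbp
  obtain ⟨z, hz⟩ := hcp
  have hx2 : 2 ≤ x := by
    rcases Nat.lt_or_ge x 2 with h' | h'
    · interval_cases x <;> omega
    · exact h'
  have hy2 : 2 ≤ y := by
    rcases Nat.lt_or_ge y 2 with h' | h'
    · interval_cases y <;> omega
    · exact h'
  have hz2 : 2 ≤ z := by
    rcases Nat.lt_or_ge z 2 with h' | h'
    · interval_cases z <;> omega
    · exact h'
  have hE : y*z + x*z + x*y = x*y*z := by
    have hmul : p * (y*z + x*z + x*y) = p * (x*y*z) := by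
      calc p * (y*z + x*z + x*y) = (a*x)*(y*z) + (b*y)*(x*z) + (c*z)*(x*y) := by
            rw [← hx, ← hy, ← hz]; ring
      _ = (a + b + c) * (x*y*z) := by ring
      _ = p * (x*y*z) := by rw [← h]
    exact Nat.eq_of_mul_eq_mul_left hp hmul
  have hx6 : x ≤ 6 := aux_bound x y z hx2 hy2 hz2 hE
  have hy6 : y ≤ 6 := aux_bound y x z hy2 hx2 hz2 (by zify at hE ⊢; linear_combination hE)
  have hz6 : z ≤ 6 := aux_bound z x y hz2 hx2 hy2 (by zify at hE ⊢; linear_combination hE)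
  -- a ∣ y and b ∣ x
  have haxby : a * x = b * y := by omega
  have hady : a ∣ y := by
    have : a ∣ b * y := ⟨x, haxby.symm⟩
    exact (Nat.Coprime.dvd_of_dvd_mul_left hcop this)
  have hbdx : b ∣ x := by
    have : b ∣ a * x := ⟨y, haxby⟩
    exact (Nat.Coprime.dvd_of_dvd_mul_left (Nat.coprime_comm.mp hcop) this)
  have ha6 : a ≤ 6 := le_trans (Nat.le_of_dvd (by omega) hady) hy6
  have hb6 : b ≤ 6 := le_trans (Nat.le_of_dvd (by omega) hbdx) hx6
  interval_cases x <;> interval_cases y <;> interval_cases z <;>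
    first
      | omega
      | (interval_cases a <;> interval_cases b <;>
          first
            | omega
            | exact absurd hcop (by decide))
end

section
/- A pair (p,q) of integers with p < 0, q > 0, p + q ≥ 0, gcd(p,q)=1 satisfies p + q = gcd(2q,-p) + gcd(q,-2p) if and only if (p,q) has one of the forms (2-6u, 1+6u), (4-6u, -1+6u), (1-6u, 2+6u), (5-6u, -2+6u), (1-2u, 1+2u) for some positive integer u making p negative and q positive. -/
/-! Since `gcd(p, q) = 1`, the factors `2` can be cancelled down to `gcd(2, p) + gcd(2, q)`, which
is `2 + 1` when exactly one of `p, q` is even and `1 + 1` when both are odd (they cannot both be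
even). So the equation holds iff either `p + q = 3`, where coprimality rules out `3 ∣ p`, or
`p + q = 2` with `p` odd; reading off `p` modulo `6`, resp. modulo `2`, gives the five families. -/

namespace Int

theorem gcd_mul_right_cancel {a b : ℤ} (c : ℤ) (h : gcd b a = 1) : gcd (c * b) a = gcd c a := by
  rw [gcd, natAbs_mul]
  exact Nat.Coprime.gcd_mul_right_cancel _ h

theorem natCast_gcd_two_left (n : ℤ) : (gcd 2 n : ℤ) = 2 - n % 2 := by
  have hgcd : gcd 2 n = gcd 2 (n % 2) := by
    rw [← gcd_add_mul_left_right 2 (n % 2) (n / 2), emod_add_mul_ediv]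
  rcases emod_two_eq_zero_or_one n with h | h <;> rw [hgcd, h] <;> rfl

theorem not_dvd_of_gcd_eq_one {a b d : ℤ} (h : gcd a b = 1) (hd : 2 ≤ d) (ha : d ∣ a) :
    ¬ d ∣ b := fun hb => by
  have := le_of_dvd one_pos (h ▸ dvd_coe_gcd ha hb)
  omega

end Int

theorem exists_families_iff {p q : ℤ} (hp : p < 0) :
    (∃ u : ℤ, 0 < u ∧
        ((p, q) = (2 - 6 * u, 1 + 6 * u) ∨ (p, q) = (4 - 6 * u, -1 + 6 * u) ∨
         (p, q) = (1 - 6 * u, 2 + 6 * u) ∨ (p, q) = (5 - 6 * u, -2 + 6 * u) ∨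
         (p, q) = (1 - 2 * u, 1 + 2 * u))) ↔
      (p + q = 3 ∧ ¬ 3 ∣ p) ∨ (p + q = 2 ∧ ¬ 2 ∣ p) := by
  simp only [Prod.mk.injEq]
  constructor
  · rintro ⟨u, -, h⟩
    omega
  · rintro (⟨hsum, h3⟩ | ⟨hsum, h2⟩)
    -- `(5 - p) / 6` is `(r - p) / 6` for each residue `r ∈ {1, 2, 4, 5}` of `p` modulo `6`
    · exact ⟨(5 - p) / 6, by omega, by omega⟩
    · exact ⟨(1 - p) / 2, by omega, by omega⟩

theorem stmt_18_general (p q : ℤ) (hp : p < 0)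
    (hgcd : Int.gcd p q = 1) :
    p + q = (Int.gcd (2 * q) (-p) : ℤ) + (Int.gcd q (-2 * p) : ℤ) ↔
      ∃ u : ℤ, 0 < u ∧
        ((p, q) = (2 - 6 * u, 1 + 6 * u) ∨ (p, q) = (4 - 6 * u, -1 + 6 * u) ∨
         (p, q) = (1 - 6 * u, 2 + 6 * u) ∨ (p, q) = (5 - 6 * u, -2 + 6 * u) ∨
         (p, q) = (1 - 2 * u, 1 + 2 * u)) := by
  have hgcd_p : Int.gcd (2 * q) (-p) = Int.gcd 2 p := by
    rw [Int.gcd_neg, Int.gcd_mul_right_cancel 2 (Int.gcd_comm p q ▸ hgcd)]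
  have hgcd_q : Int.gcd q (-2 * p) = Int.gcd 2 q := by
    rw [neg_mul, Int.gcd_neg, Int.gcd_comm, Int.gcd_mul_right_cancel 2 hgcd]
  have h2 : 2 ∣ p → ¬ 2 ∣ q := Int.not_dvd_of_gcd_eq_one hgcd (by norm_num)
  have h3 : 3 ∣ p → ¬ 3 ∣ q := Int.not_dvd_of_gcd_eq_one hgcd (by norm_num)
  rw [hgcd_p, hgcd_q, Int.natCast_gcd_two_left, Int.natCast_gcd_two_left, exists_families_iff hp]
  omega

theorem stmt_18 (p q : ℤ) (hp : p < 0) (hq : 0 < q) (h1 : 0 ≤ p + q)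
    (hgcd : Int.gcd p q = 1) :
    p + q = (Int.gcd (2 * q) (-p) : ℤ) + (Int.gcd q (-2 * p) : ℤ) ↔
      ∃ u : ℤ, 0 < u ∧
        ((p, q) = (2 - 6 * u, 1 + 6 * u) ∨ (p, q) = (4 - 6 * u, -1 + 6 * u) ∨
         (p, q) = (1 - 6 * u, 2 + 6 * u) ∨ (p, q) = (5 - 6 * u, -2 + 6 * u) ∨
         (p, q) = (1 - 2 * u, 1 + 2 * u)) :=
  stmt_18_general p q hp hgcd
end
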